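/- For every nonnegative integer n and all complex numbers a, b, c, one has (a)^(n) · (c − b)^(n) = ∑_{k=0}^{n} (−1)^k · C(n, k) · (a + c + n − 1)^(k) · (c + k)^(n−k) · (b)^(k) · (a + b + k)^(n−k). -/

import Mathlib

/-- The rising factorial (Pochhammer symbol) `(y)^(k) = y(y+1)⋯(y+k-1)`. -/
noncomputable def risingFactorial (x : ℂ) (n : ℕ) : ℂ :=
  ∏ i ∈ Finset.range n, (x + i)

open Finset

lemma rf_zero (x : ℂ) : risingFactorial x 0 = 1 := by simp [risingFactorial]

lemma rf_succ (x : ℂ) (n : ℕ) : risingFactorial x (n+1) = risingFactorial x n * (x + n) :=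
  Finset.prod_range_succ _ _

lemma rf_add (x : ℂ) (m k : ℕ) :
    risingFactorial x (m + k) = risingFactorial x m * risingFactorial (x + m) k := by
  unfold risingFactorial
  rw [Finset.prod_range_add]
  congr 1
  refine Finset.prod_congr rfl fun i _ => ?_
  push_cast; ring

lemma rf_reflect (x : ℂ) (n : ℕ) :
    risingFactorial (-x - n + 1) n = (-1)^n * risingFactorial x n := by
  unfold risingFactorial
  rw [← Finset.prod_range_reflect (fun i => (-x - n + 1 + i)) n]
  rw [show ((-1:ℂ))^n * ∏ i ∈ range n, (x + i) = ∏ i ∈ range n, (-1 * (x + i)) by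
    rw [Finset.prod_mul_distrib, Finset.prod_const, Finset.card_range]]
  refine Finset.prod_congr rfl fun i hi => ?_
  rw [Finset.mem_range] at hi
  have : ((n - 1 - i : ℕ) : ℂ) = (n : ℂ) - 1 - i := by
    have h1 : i ≤ n - 1 := by omega
    have h2 : 1 ≤ n := by omega
    push_cast [Nat.cast_sub h1, Nat.cast_sub h2]; ring
  rw [this]; ring

lemma rf_vandermonde (x y : ℂ) (n : ℕ) :
    risingFactorial (x + y) n =
      ∑ k ∈ range (n + 1), (n.choose k : ℂ) * risingFactorial x k * risingFactorial y (n - k) := by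
  induction n with
  | zero => simp [risingFactorial]
  | succ n ih =>
    rw [rf_succ, ih, Finset.sum_mul]
    have hsplit : ∀ k ∈ range (n+1),
        (n.choose k : ℂ) * risingFactorial x k * risingFactorial y (n - k) * (x + y + n)
          = (n.choose k : ℂ) * risingFactorial x (k+1) * risingFactorial y (n - k)
            + (n.choose k : ℂ) * risingFactorial x k * risingFactorial y (n - k + 1) := by
      intro k hk
      rw [Finset.mem_range] at hk
      rw [rf_succ, rf_succ]
      have : (x + y + n) = (x + k) + (y + (n - k : ℕ)) := by
        have : ((n - k : ℕ) : ℂ) = (n : ℂ) - k := by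
          push_cast [Nat.cast_sub (by omega : k ≤ n)]; ring
        rw [this]; ring
      rw [this]; ring
    rw [Finset.sum_congr rfl hsplit, Finset.sum_add_distrib]
    rw [Finset.sum_range_succ' (fun k => ((n+1).choose k : ℂ) * risingFactorial x k
      * risingFactorial y (n+1-k)) (n+1)]
    have hB : ∑ k ∈ range (n+1), (n.choose k : ℂ) * risingFactorial x k * risingFactorial y (n - k + 1)
        = (∑ i ∈ range n, (n.choose (i+1) : ℂ) * risingFactorial x (i+1) * risingFactorial y (n - (i+1) + 1))
          + (n.choose 0 : ℂ) * risingFactorial x 0 * risingFactorial y (n - 0 + 1) :=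
      Finset.sum_range_succ' _ n
    have hR : ∑ k ∈ range (n+1), ((n+1).choose (k+1) : ℂ) * risingFactorial x (k+1)
          * risingFactorial y (n+1-(k+1))
        = (∑ k ∈ range (n+1), (n.choose k : ℂ) * risingFactorial x (k+1) * risingFactorial y (n - k))
          + ∑ i ∈ range n, (n.choose (i+1) : ℂ) * risingFactorial x (i+1) * risingFactorial y (n - (i+1) + 1) := by
      have step : ∀ k ∈ range (n+1), ((n+1).choose (k+1) : ℂ) * risingFactorial x (k+1)
            * risingFactorial y (n+1-(k+1))
          = (n.choose k : ℂ) * risingFactorial x (k+1) * risingFactorial y (n - k)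
            + (n.choose (k+1) : ℂ) * risingFactorial x (k+1) * risingFactorial y (n-k) := by
        intro k hk
        rw [Nat.choose_succ_succ, Nat.cast_add, Nat.succ_sub_succ_eq_sub]
        ring
      have e2 : ∑ k ∈ range (n+1), (n.choose (k+1) : ℂ) * risingFactorial x (k+1)
            * risingFactorial y (n-k)
          = ∑ i ∈ range n, (n.choose (i+1) : ℂ) * risingFactorial x (i+1)
            * risingFactorial y (n - (i+1) + 1) := by
        rw [Finset.sum_range_succ]
        simp only [Nat.choose_succ_self, Nat.cast_zero, zero_mul, add_zero]
        refine Finset.sum_congr rfl fun i hi => ?_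
        rw [Finset.mem_range] at hi
        congr 2
        omega
      rw [Finset.sum_congr rfl step, Finset.sum_add_distrib, e2]
    rw [hB, hR]
    simp [rf_zero]
    ring

lemma rf_V (x y : ℂ) (m : ℕ) :
    ∑ k ∈ range (m+1), (-1)^k * (m.choose k : ℂ) * risingFactorial x k
        * risingFactorial (y + k) (m - k)
      = (-1)^m * risingFactorial (x - y - m + 1) m := by
  have key : ∀ k ∈ range (m+1),
      (-1:ℂ)^k * (m.choose k : ℂ) * risingFactorial x k * risingFactorial (y + k) (m - k)
        = (-1)^m * ((m.choose k : ℂ) * risingFactorial x k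
            * risingFactorial (-y - m + 1) (m - k)) := by
    intro k hk
    rw [Finset.mem_range] at hk
    have hrefl := rf_reflect (y + k) (m - k)
    have harg : -(y + (k:ℂ)) - ((m - k : ℕ) : ℂ) + 1 = -y - m + 1 := by
      have : ((m - k : ℕ) : ℂ) = (m:ℂ) - k := by
        push_cast [Nat.cast_sub (by omega : k ≤ m)]; ring
      rw [this]; ring
    rw [harg] at hrefl
    rw [hrefl]
    have hsign : ((-1:ℂ))^m * (-1)^(m-k) = (-1)^k := by
      rw [← pow_add]
      have : m + (m-k) = 2*(m-k) + k := by omega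
      rw [this, pow_add, pow_mul]; simp
    rw [← hsign]; ring
  rw [Finset.sum_congr rfl key, ← Finset.mul_sum, ← rf_vandermonde]
  rw [show x + (-y - (m:ℂ) + 1) = x - y - m + 1 from by ring]

lemma tri_swap (n : ℕ) (f : ℕ → ℕ → ℂ) :
    ∑ k ∈ range (n+1), ∑ j ∈ range (n+1-k), f k j
      = ∑ j ∈ range (n+1), ∑ k ∈ range (n+1-j), f k j := by
  have h : ∀ g : ℕ → ℕ → ℂ, ∀ k ∈ range (n+1),
      ∑ j ∈ range (n+1-k), g k j = ∑ j ∈ range (n+1), if k + j ≤ n then g k j else 0 := by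
    intro g k hk
    rw [Finset.mem_range] at hk
    rw [← Finset.sum_filter]
    apply Finset.sum_congr _ fun _ _ => rfl
    ext j
    simp only [Finset.mem_range, Finset.mem_filter]
    omega
  rw [Finset.sum_congr rfl (h f), Finset.sum_congr rfl (h (fun j k => f k j)),
    Finset.sum_comm]
  refine Finset.sum_congr rfl fun j _ => Finset.sum_congr rfl fun k _ => ?_
  rw [Nat.add_comm j k]

lemma choose_swap {n k j : ℕ} (h : k + j ≤ n) :
    n.choose k * (n-k).choose j = n.choose j * (n-j).choose k := by
  have h1 := Nat.choose_mul (n := n) (show k ≤ k+j by omega)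
  have h2 := Nat.choose_mul (n := n) (show j ≤ k+j by omega)
  rw [Nat.add_sub_cancel_left] at h1
  rw [Nat.add_sub_cancel] at h2
  have hsym : (k+j).choose k = (k+j).choose j := by
    rw [← Nat.choose_symm (show k ≤ k + j by omega), Nat.add_sub_cancel_left]
  rw [← h1, ← h2, hsym]

theorem stmt_10 (n : ℕ) (a b c : ℂ) :
    risingFactorial a n * risingFactorial (c - b) n =
      ∑ k ∈ Finset.range (n + 1),
        (-1) ^ k * (n.choose k : ℂ) * risingFactorial (a + c + n - 1) k *
          risingFactorial (c + k) (n - k) * risingFactorial b k *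
            risingFactorial (a + b + k) (n - k) := by
  symm
  -- Step 1: expand rf (c+k) (n-k) by Vandermonde and merge rf b k with rf (b+k)
  have step1 : ∀ k ∈ range (n+1),
      (-1:ℂ) ^ k * (n.choose k : ℂ) * risingFactorial (a + c + n - 1) k *
          risingFactorial (c + k) (n - k) * risingFactorial b k *
            risingFactorial (a + b + k) (n - k)
        = ∑ j ∈ range (n+1-k),
            (-1:ℂ)^k * (n.choose k : ℂ) * (((n-k).choose j : ℂ))
              * risingFactorial (a + c + n - 1) k * risingFactorial (c - b) j
              * risingFactorial b (n-j) * risingFactorial (a + b + k) (n - k) := by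
    intro k hk
    rw [Finset.mem_range] at hk
    rw [show ((c:ℂ) + k) = (c - b) + (b + k) from by ring, rf_vandermonde (c-b) (b+k) (n-k),
      show n - k + 1 = n + 1 - k by omega, Finset.mul_sum, Finset.sum_mul, Finset.sum_mul]
    refine Finset.sum_congr rfl fun j hj => ?_
    rw [Finset.mem_range] at hj
    have hb : risingFactorial b (n-j)
        = risingFactorial b k * risingFactorial (b + k) (n-k-j) := by
      rw [show n - j = k + (n-k-j) by omega, rf_add]
    rw [hb]; ring
  rw [Finset.sum_congr rfl step1,
    tri_swap n (fun k j => (-1:ℂ)^k * (n.choose k : ℂ) * (((n-k).choose j : ℂ))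
      * risingFactorial (a + c + n - 1) k * risingFactorial (c - b) j
      * risingFactorial b (n-j) * risingFactorial (a + b + k) (n - k))]
  -- Step 2: evaluate the inner sum over k
  have step2 : ∀ j ∈ range (n+1),
      ∑ k ∈ range (n+1-j),
          (-1:ℂ)^k * (n.choose k : ℂ) * (((n-k).choose j : ℂ))
            * risingFactorial (a + c + n - 1) k * risingFactorial (c - b) j
            * risingFactorial b (n-j) * risingFactorial (a + b + k) (n - k)
        = risingFactorial (c-b) n * ((-1:ℂ)^(n-j) * (n.choose j : ℂ)
            * risingFactorial b (n-j) * risingFactorial (a + b + ((n-j : ℕ):ℂ)) j) := by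
    intro j hj
    rw [Finset.mem_range] at hj
    have e : ∀ k ∈ range (n+1-j),
        (-1:ℂ)^k * (n.choose k : ℂ) * (((n-k).choose j : ℂ))
            * risingFactorial (a + c + n - 1) k * risingFactorial (c - b) j
            * risingFactorial b (n-j) * risingFactorial (a + b + k) (n - k)
          = ((n.choose j : ℂ) * risingFactorial (c - b) j * risingFactorial b (n-j)
              * risingFactorial (a + b + ((n-j : ℕ):ℂ)) j)
            * ((-1:ℂ)^k * (((n-j).choose k : ℂ)) * risingFactorial (a + c + n - 1) k
              * risingFactorial ((a + b) + (k:ℂ)) ((n-j) - k)) := by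
      intro k hk
      rw [Finset.mem_range] at hk
      have hch : (n.choose k : ℂ) * ((n-k).choose j : ℂ)
          = (n.choose j : ℂ) * ((n-j).choose k : ℂ) := by
        rw [← Nat.cast_mul, ← Nat.cast_mul, choose_swap (by omega : k + j ≤ n)]
      have hsplit : risingFactorial (a + b + k) (n - k)
          = risingFactorial ((a+b) + (k:ℂ)) ((n-j) - k)
            * risingFactorial (a + b + ((n-j : ℕ):ℂ)) j := by
        rw [show n - k = ((n-j)-k) + j by omega, rf_add]
        congr 2
        push_cast [Nat.cast_sub (by omega : j ≤ n), Nat.cast_sub (by omega : k ≤ n - j)]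
        ring
      calc _ = ((n.choose k : ℂ) * ((n-k).choose j : ℂ)) * ((-1:ℂ)^k
              * risingFactorial (a + c + n - 1) k * risingFactorial (c - b) j
              * risingFactorial b (n-j) * risingFactorial (a + b + k) (n - k)) := by ring
        _ = _ := by rw [hch, hsplit]; ring
    rw [Finset.sum_congr rfl e, ← Finset.mul_sum, show n + 1 - j = (n - j) + 1 by omega,
      rf_V (a + c + n - 1) (a+b) (n-j),
      show a + c + (n:ℂ) - 1 - (a+b) - ((n-j : ℕ):ℂ) + 1 = (c - b) + (j:ℂ) from by
        push_cast [Nat.cast_sub (by omega : j ≤ n)]; ring]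
    have hcb : risingFactorial (c-b) j * risingFactorial ((c-b) + (j:ℂ)) (n-j)
        = risingFactorial (c-b) n := by
      rw [show n = j + (n-j) by omega, rf_add]
      rw [show j + (n - j) - j = n - j by omega]
    calc _ = (risingFactorial (c-b) j * risingFactorial ((c-b) + (j:ℂ)) (n-j))
            * ((-1:ℂ)^(n-j) * (n.choose j : ℂ)
            * risingFactorial b (n-j) * risingFactorial (a + b + ((n-j : ℕ):ℂ)) j) := by ring
      _ = _ := by rw [hcb]
  rw [Finset.sum_congr rfl step2, ← Finset.mul_sum]
  -- Step 3: evaluate the outer sum by reflecting and applying rf_V again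
  have step3 : ∑ j ∈ range (n+1), ((-1:ℂ)^(n-j) * (n.choose j : ℂ)
        * risingFactorial b (n-j) * risingFactorial (a + b + ((n-j : ℕ):ℂ)) j)
      = risingFactorial a n := by
    have e : ∀ j ∈ range (n+1),
        (-1:ℂ)^(n-j) * (n.choose j : ℂ)
            * risingFactorial b (n-j) * risingFactorial (a + b + ((n-j : ℕ):ℂ)) j
          = (fun i => (-1:ℂ)^i * (n.choose i : ℂ) * risingFactorial b i
              * risingFactorial ((a + b) + (i:ℂ)) (n-i)) (n+1-1-j) := by
      intro j hj
      rw [Finset.mem_range] at hj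
      simp only
      rw [show n+1-1-j = n-j by omega, show n - (n-j) = j by omega,
        Nat.choose_symm (by omega : j ≤ n)]
    calc ∑ j ∈ range (n+1), ((-1:ℂ)^(n-j) * (n.choose j : ℂ)
          * risingFactorial b (n-j) * risingFactorial (a + b + ((n-j : ℕ):ℂ)) j)
        = ∑ j ∈ range (n+1), (fun i => (-1:ℂ)^i * (n.choose i : ℂ) * risingFactorial b i
            * risingFactorial ((a + b) + (i:ℂ)) (n-i)) (n+1-1-j) :=
          Finset.sum_congr rfl e
      _ = ∑ j ∈ range (n+1), (-1:ℂ)^j * (n.choose j : ℂ) * risingFactorial b j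
            * risingFactorial ((a + b) + (j:ℂ)) (n-j) :=
          by simpa using Finset.sum_range_reflect (fun i => (-1:ℂ)^i * (n.choose i : ℂ)
            * risingFactorial b i * risingFactorial ((a + b) + (i:ℂ)) (n-i)) (n+1)
      _ = (-1:ℂ)^n * risingFactorial (b - (a+b) - n + 1) n := rf_V b (a+b) n
      _ = risingFactorial a n := by
          rw [show b - (a+b) - (n:ℂ) + 1 = -a - n + 1 from by ring, rf_reflect,
            ← mul_assoc, ← pow_add, ← two_mul, pow_mul]
          norm_num
  rw [step3]
  ring
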